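/- Let n ∈ ℕ, let Ω ⊆ ℝⁿ be a bounded open set, and let s ∈ (0,1]. For every c₀ > 0 and A ≥ 0 there exists a constant C > 0, depending only on s, c₀ and A, with the following property: if f : ℝⁿ → ℂ satisfies N_{Z,s}(f) ≤ A and ‖f x‖ ≥ c₀ for every x ∈ Ω, then the pointwise reciprocal f⁻¹ : x ↦ (f x)⁻¹ satisfies N_{Z,s}(f⁻¹) ≤ C. -/

import Mathlib

/-!
Since `a⁻¹ - b⁻¹ = a⁻¹ (b - a) b⁻¹` and
`c⁻¹ - 2 b⁻¹ + a⁻¹ = (2 (b - a)(c - b) - b (c - 2b + a)) / (abc)`, the lower bound `c₀` turns the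
bounds on `f` into bounds on `f⁻¹`: differences pick up a factor `c₀⁻²`, and second differences a
factor `c₀⁻³`, the product of two first differences of size `‖h‖^(s/2)` being of size `‖h‖^s`.
This gives `C = c₀⁻¹ + A / c₀² + 3 A² / c₀³`.
-/
open scoped ENNReal NNReal

/-- The sup norm `N_C(f) = ⨆_{x ∈ Ω} ‖f x‖`, valued in `[0,∞]`. -/
noncomputable def NC {n : ℕ} (Ω : Set (EuclideanSpace ℝ (Fin n)))
    (f : EuclideanSpace ℝ (Fin n) → ℂ) : ℝ≥0∞ :=
  ⨆ x ∈ Ω, (‖f x‖₊ : ℝ≥0∞)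

/-- The Hölder quantity
`N_{H,σ}(f) = N_C(f) + ⨆_{x ≠ y ∈ Ω} ‖f x − f y‖ / ‖x − y‖^σ`, valued in `[0,∞]`. -/
noncomputable def NH {n : ℕ} (Ω : Set (EuclideanSpace ℝ (Fin n))) (σ : ℝ)
    (f : EuclideanSpace ℝ (Fin n) → ℂ) : ℝ≥0∞ :=
  NC Ω f + ⨆ x ∈ Ω, ⨆ y ∈ Ω, ⨆ _ : x ≠ y,
    (‖f x - f y‖₊ : ℝ≥0∞) / (‖x - y‖₊ : ℝ≥0∞) ^ σ

/-- The Zygmund quantity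
`N_{Z,s}(f) = N_{H,s/2}(f) + ⨆ ‖f(x+2h) − 2 f(x+h) + f x‖ / ‖h‖^s`, the supremum being over
`h ≠ 0` and `x` with `x, x+h, x+2h ∈ Ω`; valued in `[0,∞]`. -/
noncomputable def NZ {n : ℕ} (Ω : Set (EuclideanSpace ℝ (Fin n))) (s : ℝ)
    (f : EuclideanSpace ℝ (Fin n) → ℂ) : ℝ≥0∞ :=
  NH Ω (s / 2) f +
    ⨆ x : EuclideanSpace ℝ (Fin n), ⨆ h : EuclideanSpace ℝ (Fin n),
      ⨆ _ : h ≠ 0, ⨆ _ : x ∈ Ω, ⨆ _ : x + h ∈ Ω, ⨆ _ : x + (2 : ℝ) • h ∈ Ω,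
        (‖f (x + (2 : ℝ) • h) - 2 * f (x + h) + f x‖₊ : ℝ≥0∞) / (‖h‖₊ : ℝ≥0∞) ^ s
section InverseEstimates

variable {𝕜 : Type*} {a b c : 𝕜} {c₀ : ℝ}

theorem norm_inv_sub_inv_le [NormedDivisionRing 𝕜] (hc₀ : 0 < c₀) (ha : c₀ ≤ ‖a‖)
    (hb : c₀ ≤ ‖b‖) : ‖a⁻¹ - b⁻¹‖ ≤ ‖a - b‖ / c₀ ^ 2 := by
  have ha₀ : a ≠ 0 := norm_pos_iff.1 (hc₀.trans_le ha)
  have hb₀ : b ≠ 0 := norm_pos_iff.1 (hc₀.trans_le hb)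
  calc ‖a⁻¹ - b⁻¹‖ = ‖a - b‖ / (‖a‖ * ‖b‖) := by
        rw [inv_sub_inv' ha₀ hb₀, norm_mul, norm_mul, norm_inv, norm_inv, norm_sub_rev]
        field_simp
    _ ≤ ‖a - b‖ / c₀ ^ 2 := by
        rw [sq]
        gcongr

theorem inv_secondDiff_eq [Field 𝕜] (ha : a ≠ 0) (hb : b ≠ 0) (hc : c ≠ 0) :
    c⁻¹ - 2 * b⁻¹ + a⁻¹ =
      ((b - a) * (c - b) + (b - a) * (c - b) - b * (c - 2 * b + a)) / (a * b * c) := by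
  field_simp
  ring

theorem norm_inv_secondDiff_le [NormedField 𝕜] {A t : ℝ} (hc₀ : 0 < c₀) (ha : c₀ ≤ ‖a‖)
    (hb : c₀ ≤ ‖b‖) (hc : c₀ ≤ ‖c‖) (hbA : ‖b‖ ≤ A) (hba : ‖b - a‖ ≤ A * t)
    (hcb : ‖c - b‖ ≤ A * t) (hΔ : ‖c - 2 * b + a‖ ≤ A * t ^ 2) :
    ‖c⁻¹ - 2 * b⁻¹ + a⁻¹‖ ≤ 3 * A ^ 2 / c₀ ^ 3 * t ^ 2 := by
  have hAt : 0 ≤ A * t := (norm_nonneg _).trans hba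
  have hnum : ‖(b - a) * (c - b) + (b - a) * (c - b) - b * (c - 2 * b + a)‖ ≤
      A * t * (A * t) + A * t * (A * t) + A * (A * t ^ 2) := by
    refine (norm_sub_le _ _).trans ?_
    refine add_le_add ((norm_add_le _ _).trans ?_) ?_ <;> rw [norm_mul]
    · gcongr
    · gcongr
      exact (norm_nonneg _).trans hbA
  have hden : c₀ ^ 3 ≤ ‖a * b * c‖ := by
    rw [norm_mul, norm_mul, pow_three, ← mul_assoc]
    gcongr
  calc ‖c⁻¹ - 2 * b⁻¹ + a⁻¹‖
      = ‖(b - a) * (c - b) + (b - a) * (c - b) - b * (c - 2 * b + a)‖ / ‖a * b * c‖ := by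
        rw [inv_secondDiff_eq, norm_div] <;> exact norm_pos_iff.1 (hc₀.trans_le ‹_›)
    _ ≤ (A * t * (A * t) + A * t * (A * t) + A * (A * t ^ 2)) / c₀ ^ 3 :=
        div_le_div₀ ((norm_nonneg _).trans hnum) hnum (by positivity) hden
    _ = 3 * A ^ 2 / c₀ ^ 3 * t ^ 2 := by ring

end InverseEstimates

theorem coe_nnnorm_le_ofReal_iff {E : Type*} [SeminormedAddGroup E] {u : E} {K : ℝ}
    (hK : 0 ≤ K) : (‖u‖₊ : ℝ≥0∞) ≤ ENNReal.ofReal K ↔ ‖u‖ ≤ K := by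
  rw [← enorm_eq_nnnorm, ← ofReal_norm, ENNReal.ofReal_le_ofReal_iff hK]

theorem coe_nnnorm_div_rpow_le_ofReal_iff {E F : Type*} [SeminormedAddGroup E]
    [NormedAddGroup F] {u : E} {v : F} (hv : v ≠ 0) (σ : ℝ) {K : ℝ} (hK : 0 ≤ K) :
    (‖u‖₊ : ℝ≥0∞) / (‖v‖₊ : ℝ≥0∞) ^ σ ≤ ENNReal.ofReal K ↔ ‖u‖ ≤ K * ‖v‖ ^ σ := by
  have hv' : 0 < ‖v‖ := norm_pos_iff.2 hv
  rw [← enorm_eq_nnnorm, ← enorm_eq_nnnorm, ← ofReal_norm, ← ofReal_norm,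
    ENNReal.ofReal_rpow_of_pos hv', ENNReal.div_le_iff (by positivity) ENNReal.ofReal_ne_top, ← ENNReal.ofReal_mul hK,
    ENNReal.ofReal_le_ofReal_iff (by positivity)]

section ZygmundBounds

variable {n : ℕ} {Ω : Set (EuclideanSpace ℝ (Fin n))} {s : ℝ} {f : EuclideanSpace ℝ (Fin n) → ℂ}
  {A : ℝ}

theorem norm_le_of_NZ_le (hA : 0 ≤ A) (hf : NZ Ω s f ≤ ENNReal.ofReal A)
    {x : EuclideanSpace ℝ (Fin n)} (hx : x ∈ Ω) : ‖f x‖ ≤ A := by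
  refine (coe_nnnorm_le_ofReal_iff hA).1 (le_trans ?_ hf)
  calc (‖f x‖₊ : ℝ≥0∞) ≤ NC Ω f := le_iSup₂_of_le x hx le_rfl
    _ ≤ NZ Ω s f := le_self_add.trans le_self_add

theorem norm_sub_le_of_NZ_le (hA : 0 ≤ A) (hf : NZ Ω s f ≤ ENNReal.ofReal A)
    {x y : EuclideanSpace ℝ (Fin n)} (hx : x ∈ Ω) (hy : y ∈ Ω) :
    ‖f x - f y‖ ≤ A * ‖x - y‖ ^ (s / 2) := by
  obtain rfl | hxy := eq_or_ne x y
  · simp only [sub_self, norm_zero]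
    positivity
  refine (coe_nnnorm_div_rpow_le_ofReal_iff (sub_ne_zero.2 hxy) _ hA).1 (le_trans ?_ hf)
  refine le_trans ?_ (le_add_self.trans le_self_add : _ ≤ NZ Ω s f)
  exact le_iSup₂_of_le x hx <| le_iSup₂_of_le y hy <| le_iSup_of_le hxy le_rfl

theorem norm_secondDiff_le_of_NZ_le (hA : 0 ≤ A) (hf : NZ Ω s f ≤ ENNReal.ofReal A)
    {x h : EuclideanSpace ℝ (Fin n)} (hh : h ≠ 0) (hx : x ∈ Ω) (hxh : x + h ∈ Ω)
    (hx2h : x + (2 : ℝ) • h ∈ Ω) :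
    ‖f (x + (2 : ℝ) • h) - 2 * f (x + h) + f x‖ ≤ A * ‖h‖ ^ s := by
  refine (coe_nnnorm_div_rpow_le_ofReal_iff hh _ hA).1 (le_trans ?_ hf)
  refine le_trans ?_ (le_add_self : _ ≤ NZ Ω s f)
  exact le_iSup₂_of_le x h <| le_iSup₂_of_le hh hx <| le_iSup₂_of_le hxh hx2h le_rfl

theorem NZ_le_ofReal_of_forall {B₀ B₁ B₂ : ℝ} (hB₀ : 0 ≤ B₀)
    (hB₁ : 0 ≤ B₁) (hB₂ : 0 ≤ B₂) (h₀ : ∀ x ∈ Ω, ‖f x‖ ≤ B₀)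
    (h₁ : ∀ x ∈ Ω, ∀ y ∈ Ω, x ≠ y → ‖f x - f y‖ ≤ B₁ * ‖x - y‖ ^ (s / 2))
    (h₂ : ∀ x h, h ≠ 0 → x ∈ Ω → x + h ∈ Ω → x + (2 : ℝ) • h ∈ Ω →
      ‖f (x + (2 : ℝ) • h) - 2 * f (x + h) + f x‖ ≤ B₂ * ‖h‖ ^ s) :
    NZ Ω s f ≤ ENNReal.ofReal (B₀ + B₁ + B₂) := by
  rw [ENNReal.ofReal_add (by positivity) hB₂, ENNReal.ofReal_add hB₀ hB₁]
  refine add_le_add (add_le_add ?_ ?_) ?_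
  · exact iSup₂_le fun x hx => (coe_nnnorm_le_ofReal_iff hB₀).2 (h₀ x hx)
  · exact iSup₂_le fun x hx => iSup₂_le fun y hy => iSup_le fun hxy =>
      (coe_nnnorm_div_rpow_le_ofReal_iff (sub_ne_zero.2 hxy) _ hB₁).2 (h₁ x hx y hy hxy)
  · exact iSup₂_le fun x h => iSup₂_le fun hh hx => iSup₂_le fun hxh hx2h =>
      (coe_nnnorm_div_rpow_le_ofReal_iff hh _ hB₂).2 (h₂ x h hh hx hxh hx2h)

end ZygmundBounds

theorem zygmund_inverse_general (s : ℝ)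
    (c₀ : ℝ) (hc₀ : 0 < c₀) (A : ℝ) (hA : 0 ≤ A) :
    ∃ C : ℝ, 0 < C ∧
      ∀ (n : ℕ) (Ω : Set (EuclideanSpace ℝ (Fin n))),
        Bornology.IsBounded Ω → IsOpen Ω →
        ∀ f : EuclideanSpace ℝ (Fin n) → ℂ,
          NZ Ω s f ≤ ENNReal.ofReal A →
          (∀ x ∈ Ω, c₀ ≤ ‖f x‖) →
          NZ Ω s (fun x => (f x)⁻¹) ≤ ENNReal.ofReal C := by
  refine ⟨c₀⁻¹ + A / c₀ ^ 2 + 3 * A ^ 2 / c₀ ^ 3, by positivity, ?_⟩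
  intro n Ω _ _ f hf hlow
  refine NZ_le_ofReal_of_forall (by positivity) (by positivity) (by positivity)
    (fun x hx => ?_) (fun x hx y hy _ => ?_) (fun x h hh hx hxh hx2h => ?_)
  · simpa only [norm_inv] using inv_anti₀ hc₀ (hlow x hx)
  · calc ‖(f x)⁻¹ - (f y)⁻¹‖ ≤ ‖f x - f y‖ / c₀ ^ 2 :=
          norm_inv_sub_inv_le hc₀ (hlow x hx) (hlow y hy)
      _ ≤ A * ‖x - y‖ ^ (s / 2) / c₀ ^ 2 := by
          gcongr
          exact norm_sub_le_of_NZ_le hA hf hx hy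
      _ = A / c₀ ^ 2 * ‖x - y‖ ^ (s / 2) := by ring
  · have hsq : ‖h‖ ^ s = (‖h‖ ^ (s / 2)) ^ 2 := by
      rw [← Real.rpow_natCast, ← Real.rpow_mul (norm_nonneg h)]
      norm_num
    have hstep : ∀ {y}, y ∈ Ω → y + h ∈ Ω → ‖f (y + h) - f y‖ ≤ A * ‖h‖ ^ (s / 2) :=
      fun hy hyh => by simpa using norm_sub_le_of_NZ_le hA hf hyh hy
    rw [hsq]
    refine norm_inv_secondDiff_le hc₀ (hlow x hx) (hlow _ hxh) (hlow _ hx2h)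
      (norm_le_of_NZ_le hA hf hxh) (hstep hx hxh) ?_
      (hsq ▸ norm_secondDiff_le_of_NZ_le hA hf hh hx hxh hx2h)
    simpa [two_smul, add_assoc] using hstep hxh (by rwa [add_assoc, ← two_smul ℝ])

/-- Reciprocals in the Zygmund space `𝒞^s(Ω)`.
For `s ∈ (0,1]`, `c₀ > 0` and `A ≥ 0` there is `C > 0` depending only on `s, c₀, A` such
that for every `n`, every bounded open `Ω ⊆ ℝⁿ`, and every `f : ℝⁿ → ℂ` with
`N_{Z,s}(f) ≤ A` and `‖f x‖ ≥ c₀` on `Ω`, the pointwise reciprocal satisfies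
`N_{Z,s}(f⁻¹) ≤ C`. -/
theorem zygmund_inverse (s : ℝ) (hs0 : 0 < s) (hs1 : s ≤ 1)
    (c₀ : ℝ) (hc₀ : 0 < c₀) (A : ℝ) (hA : 0 ≤ A) :
    ∃ C : ℝ, 0 < C ∧
      ∀ (n : ℕ) (Ω : Set (EuclideanSpace ℝ (Fin n))),
        Bornology.IsBounded Ω → IsOpen Ω →
        ∀ f : EuclideanSpace ℝ (Fin n) → ℂ,
          NZ Ω s f ≤ ENNReal.ofReal A →
          (∀ x ∈ Ω, c₀ ≤ ‖f x‖) →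
          NZ Ω s (fun x => (f x)⁻¹) ≤ ENNReal.ofReal C :=
  zygmund_inverse_general s c₀ hc₀ A hA
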